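/- Let A ∈ M_n(ℝ) and let G ∈ M_n(ℝ ∪ {-∞}) be a tropical monomial matrix that commutes with A (G ⊗ A = A ⊗ G). Then all cycles in the weighted digraph of G have the same mean weight; i.e. G has exactly one tropical eigenvalue. -/

import Mathlib

open Finset Matrix

/-- Tropical (max-plus) matrix multiplication over 𝕋 = ℝ ∪ {-∞} = WithBot ℝ. -/
noncomputable def tmulT {n : ℕ} (A B : Matrix (Fin n) (Fin n) (WithBot ℝ)) :
    Matrix (Fin n) (Fin n) (WithBot ℝ) :=
  fun i j => univ.sup (fun k => A i k + B k j)

/-- Embedding of a real matrix into matrices over ℝ ∪ {-∞}. -/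
def emb {n : ℕ} (A : Matrix (Fin n) (Fin n) ℝ) : Matrix (Fin n) (Fin n) (WithBot ℝ) :=
  A.map (fun a => (a : WithBot ℝ))

private lemma fix_pow_mul {α : Type*} (σ : Equiv.Perm α) (a : α) (K : ℕ)
    (h : (σ ^ K) a = a) : ∀ M : ℕ, (σ ^ (K * M)) a = a := by
  intro M
  induction M with
  | zero => simp
  | succ M ih =>
    rw [Nat.mul_succ, pow_add, Equiv.Perm.mul_apply, h, ih]

private lemma sum_per {n : ℕ} (σ : Equiv.Perm (Fin n)) (lam : Fin n → ℝ) (a : Fin n)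
    (K : ℕ) (h : (σ ^ K) a = a) :
    ∀ M : ℕ, ∑ t ∈ Finset.range (K * M), lam ((σ ^ t) a)
      = M * ∑ t ∈ Finset.range K, lam ((σ ^ t) a) := by
  intro M
  induction M with
  | zero => simp
  | succ M ih =>
    rw [Nat.mul_succ, Finset.sum_range_add, ih]
    have : ∀ t, (σ ^ (K * M + t)) a = (σ ^ t) a := by
      intro t
      rw [add_comm, pow_add, Equiv.Perm.mul_apply, fix_pow_mul σ a K h M]
    simp only [this]
    push_cast
    ring

theorem commuting_unit_unique_eigenvalue {n : ℕ}
    (A : Matrix (Fin n) (Fin n) ℝ)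
    (G : Matrix (Fin n) (Fin n) (WithBot ℝ))
    (σ : Equiv.Perm (Fin n)) (lam : Fin n → ℝ)
    (hG : ∀ i j, G i j = if j = σ i then (lam i : WithBot ℝ) else ⊥)
    (hcomm : tmulT G (emb A) = tmulT (emb A) G) :
    ∃ μ : ℝ, ∀ (k : ℕ) (c : Fin (k + 1) → Fin n),
      (∀ i, c (i + 1) = σ (c i)) →
      (∑ i, lam (c i)) / (k + 1) = μ := by
  rcases isEmpty_or_nonempty (Fin n) with hE | hNE
  · exact ⟨0, fun k c _ => (hE.false (c 0)).elim⟩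
  -- key commutation identity, entrywise
  have key : ∀ i j, lam i + A (σ i) (σ j) = A i j + lam j := by
    intro i j
    have h1 : tmulT G (emb A) i (σ j) = ((lam i + A (σ i) (σ j) : ℝ) : WithBot ℝ) := by
      show univ.sup (fun k => G i k + emb A k (σ j)) = _
      apply le_antisymm
      · apply Finset.sup_le
        intro k _
        by_cases hk : k = σ i
        · subst hk
          rw [hG]
          simp [emb, ← WithBot.coe_add]
        · rw [hG]
          simp [hk]
      · have h := Finset.le_sup (f := fun k => G i k + emb A k (σ j)) (Finset.mem_univ (σ i))
        simpa [hG, emb, ← WithBot.coe_add] using h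
    have h2 : tmulT (emb A) G i (σ j) = ((A i j + lam j : ℝ) : WithBot ℝ) := by
      show univ.sup (fun k => emb A i k + G k (σ j)) = _
      apply le_antisymm
      · apply Finset.sup_le
        intro k _
        by_cases hk : k = j
        · subst hk
          rw [hG]
          simp [emb, ← WithBot.coe_add]
        · rw [hG]
          have : ¬ (σ j = σ k) := fun h => hk (σ.injective h).symm
          simp [this]
      · have h := Finset.le_sup (f := fun k => emb A i k + G k (σ j)) (Finset.mem_univ j)
        simpa [hG, emb, ← WithBot.coe_add] using h
    have := congr_fun (congr_fun hcomm i) (σ j)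
    rw [h1, h2] at this
    exact_mod_cast this
  -- telescoping along powers of σ
  have tel : ∀ (m : ℕ) (i j : Fin n),
      (∑ t ∈ Finset.range m, lam ((σ ^ t) i)) + A ((σ ^ m) i) ((σ ^ m) j)
        = A i j + ∑ t ∈ Finset.range m, lam ((σ ^ t) j) := by
    intro m
    induction m with
    | zero => simp
    | succ m ih =>
      intro i j
      have hk := key ((σ ^ m) i) ((σ ^ m) j)
      have hp : ∀ x : Fin n, (σ ^ (m + 1)) x = σ ((σ ^ m) x) := by
        intro x
        rw [pow_succ', Equiv.Perm.mul_apply]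
      rw [Finset.sum_range_succ, Finset.sum_range_succ, hp, hp]
      have := ih i j
      linarith
  set N := orderOf σ with hNdef
  have hNpos : 0 < N := orderOf_pos σ
  have hfixN : ∀ x : Fin n, (σ ^ N) x = x := by
    intro x; rw [pow_orderOf_eq_one]; rfl
  obtain ⟨i₀⟩ := hNE
  refine ⟨(∑ t ∈ Finset.range N, lam ((σ ^ t) i₀)) / N, ?_⟩
  intro k c hc
  -- c follows the orbit of σ
  have claim : ∀ (t : ℕ) (ht : t < k + 1), c ⟨t, ht⟩ = (σ ^ t) (c 0) := by
    intro t
    induction t with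
    | zero => intro ht; simp
    | succ t ih =>
      intro ht
      have ht' : t < k + 1 := Nat.lt_of_succ_lt ht
      have h1 : (⟨t, ht'⟩ : Fin (k + 1)) + 1 = ⟨t + 1, ht⟩ := by
        apply Fin.ext
        simp [Fin.add_def]
        omega
      have := hc ⟨t, ht'⟩
      rw [h1, ih ht'] at this
      rw [this, pow_succ', Equiv.Perm.mul_apply]
  -- c 0 is periodic of period k+1
  have hper : (σ ^ (k + 1)) (c 0) = c 0 := by
    have hk : k < k + 1 := Nat.lt_succ_self k
    have h1 : (⟨k, hk⟩ : Fin (k + 1)) + 1 = 0 := by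
      apply Fin.ext
      simp [Fin.add_def]
    have := hc ⟨k, hk⟩
    rw [h1, claim k hk] at this
    rw [pow_succ', Equiv.Perm.mul_apply, ← this]
  -- rewrite sum
  have hsum : ∑ i, lam (c i) = ∑ t ∈ Finset.range (k + 1), lam ((σ ^ t) (c 0)) := by
    rw [← Fin.sum_univ_eq_sum_range (fun t => lam ((σ ^ t) (c 0))) (k + 1)]
    apply Finset.sum_congr rfl
    intro i _
    congr 1
    rw [← claim i.val i.isLt]
  set a := c 0
  set K := k + 1 with hK
  have hteleq := tel (K * N) a i₀
  rw [fix_pow_mul σ a K hper N] at hteleq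
  have hfix2 : (σ ^ (K * N)) i₀ = i₀ := by
    rw [Nat.mul_comm]; exact fix_pow_mul σ i₀ N (hfixN i₀) K
  rw [hfix2] at hteleq
  have hs1 : ∑ t ∈ Finset.range (K * N), lam ((σ ^ t) a)
      = N * ∑ t ∈ Finset.range K, lam ((σ ^ t) a) := sum_per σ lam a K hper N
  have hs2 : ∑ t ∈ Finset.range (K * N), lam ((σ ^ t) i₀)
      = K * ∑ t ∈ Finset.range N, lam ((σ ^ t) i₀) := by
    rw [Nat.mul_comm]; exact sum_per σ lam i₀ N (hfixN i₀) K
  rw [hs1, hs2] at hteleq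
  have hmain : (N : ℝ) * ∑ t ∈ Finset.range K, lam ((σ ^ t) a)
      = K * ∑ t ∈ Finset.range N, lam ((σ ^ t) i₀) := by linarith
  rw [hsum]
  have hKpos : (0 : ℝ) < K := by positivity
  have hNpos' : (0 : ℝ) < N := by exact_mod_cast hNpos
  rw [div_eq_div_iff (by positivity) (ne_of_gt hNpos')]
  push_cast at hmain ⊢
  rw [hK] at hmain
  push_cast at hmain
  linarith
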